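/- arXiv:2001.09617 — 2 statements merged into one kernel-verified Lean document; each statement's English description precedes it below -/
import Mathlib

section
/- The equation x² + 1 = yⁿ has no solutions in positive integers x, y, n with min{x, y, n} > 1. -/
/-!
For even `n` the equation says that `x² + 1` is a perfect square, which it is not.
For odd `n`, `x` is even, so `x + i` and `x - i` are coprime in `ℤ[i]` with product `yⁿ`; as every
unit of `ℤ[i]` is an `n`-th power, `x + i = wⁿ`. Comparing imaginary parts forces `w = a ± i`, and
the norm shows that `a` is even and nonzero. Multiplying by a power of `i` turns `x + i = (a ± i)ⁿ`
into `|Re (1 + a i)ⁿ| = 1`. But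
`Re (1 + a i)ⁿ = 1 - C(n,2) a² + ∑_{j ≥ 2} (-1)ʲ C(n,2j) a²ʲ`, and each term of the tail is
divisible by a strictly higher power of `2` than `C(n,2) a²`, because
`C(n,2j) · j (2j - 1) = C(n,2) · C(n-2,2j-2)` while `v₂(a²ʲ⁻²) ≥ 2j - 2 > v₂(j)`.
So the real part is not `1`, and it is not `-1` since it is `1` modulo `4`.
-/

open Finset Zsqrtd

local notation "ℤ[i]" => GaussianInt

theorem Nat.pow_dvd_of_pow_add_dvd_mul {p c e X Y : ℕ} (hp : p.Prime) (hY0 : Y ≠ 0)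
    (hY : Y < p ^ (e + 1)) (h : p ^ (c + e) ∣ X * Y) : p ^ c ∣ X := by
  obtain ⟨v, w, hpw, rfl⟩ := Nat.exists_eq_pow_mul_and_not_dvd hY0 p hp.ne_one
  have hv : v ≤ e := by
    have hw0 : 0 < w := Nat.pos_of_ne_zero (right_ne_zero_of_mul hY0)
    have := (Nat.pow_lt_pow_iff_right hp.one_lt).mp ((Nat.le_mul_of_pos_right _ hw0).trans_lt hY)
    omega
  have hcop : Nat.Coprime (p ^ (c + e)) w :=
    Nat.Coprime.pow_left _ ((Nat.Prime.coprime_iff_not_dvd hp).2 hpw)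
  have hXv : p ^ (c + e) ∣ X * p ^ v := hcop.dvd_of_dvd_mul_right (by rwa [← mul_assoc] at h)
  have hXv' : p ^ c * p ^ v ∣ X * p ^ v := by
    rw [← pow_add]
    exact (pow_dvd_pow p (by omega)).trans hXv
  exact Nat.dvd_of_mul_dvd_mul_right (pow_pos hp.pos v) hXv'

theorem two_pow_succ_dvd_choose_mul_pow {n c j A : ℕ} (hA : 2 ∣ A)
    (hc : 2 ^ c ∣ n.choose 2 * A ^ 2) (hj : 2 ≤ j) :
    2 ^ (c + 1) ∣ n.choose (2 * j) * A ^ (2 * j) := by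
  have hchoose :
      n.choose (2 * j) * (j * (2 * j - 1)) = n.choose 2 * (n - 2).choose (2 * j - 2) := by
    rw [← Nat.choose_mul (by omega), Nat.choose_two_right]
    congr 1
    rw [show 2 * j * (2 * j - 1) = 2 * (j * (2 * j - 1)) by ring, Nat.mul_div_cancel_left _ two_pos]
  have hmul : 2 ^ (c + (2 * j - 2)) ∣ n.choose (2 * j) * A ^ (2 * j) * j * (2 * j - 1) := by
    have hA2 : A ^ (2 * j) = A ^ 2 * A ^ (2 * j - 2) := by rw [← pow_add]; congr 1; omega
    have hsplit : n.choose (2 * j) * A ^ (2 * j) * j * (2 * j - 1)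
        = (n.choose 2 * A ^ 2) * (A ^ (2 * j - 2) * (n - 2).choose (2 * j - 2)) :=
      calc _ = A ^ 2 * A ^ (2 * j - 2) * (n.choose (2 * j) * (j * (2 * j - 1))) := by
            rw [← hA2]; ring
        _ = _ := by rw [hchoose]; ring
    rw [hsplit, pow_add]
    exact mul_dvd_mul hc (dvd_mul_of_dvd_left (pow_dvd_pow_of_dvd hA _) _)
  have hodd : Nat.Coprime (2 ^ (c + (2 * j - 2))) (2 * j - 1) :=
    Nat.Coprime.pow_left _ (Nat.coprime_two_left.mpr ⟨j - 1, by omega⟩)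
  have hj_lt : j < 2 ^ (2 * j - 3 + 1) :=
    j.lt_two_pow_self.trans_le (Nat.pow_le_pow_right two_pos (by omega))
  refine Nat.pow_dvd_of_pow_add_dvd_mul Nat.prime_two (by omega) hj_lt ?_
  rw [show c + 1 + (2 * j - 3) = c + (2 * j - 2) by omega]
  exact hodd.dvd_of_dvd_mul_right hmul

theorem pow_mul_self_eq_of_pow_four_eq_one {M : Type*} [Monoid M] {z : M} (h : z ^ 4 = 1)
    {n : ℕ} (hn : Odd n) : z ^ (n * n) = z := by
  obtain ⟨m, rfl⟩ := hn
  rw [show (2 * m + 1) * (2 * m + 1) = 4 * (m * m + m) + 1 by ring, pow_succ, pow_mul, h,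
    one_pow, one_mul]

theorem Int.even_of_sq_add_one_eq_pow {x y : ℤ} {n : ℕ} (hn : 2 ≤ n) (h : x ^ 2 + 1 = y ^ n) :
    Even x := by
  rcases Int.even_or_odd y with hy | hy
  · have h4 : (4 : ℤ) ∣ x ^ 2 + 1 :=
      h ▸ (pow_dvd_pow_of_dvd hy.two_dvd 2).trans (pow_dvd_pow y hn)
    rcases Int.even_or_odd x with hx | hx
    · exact hx
    · have := Int.sq_mod_four_eq_one_of_odd hx
      omega
  · have := h ▸ hy.pow (n := n)
    simpa [parity_simps] using this

namespace Zsqrtd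

variable {d : ℤ}

theorem re_sum {ι : Type*} (s : Finset ι) (f : ι → ℤ√d) :
    (∑ i ∈ s, f i).re = ∑ i ∈ s, (f i).re :=
  map_sum (AddMonoidHom.mk' (re : ℤ√d → ℤ) re_add) f s

theorem re_mk_one_pow (a : ℤ) (n : ℕ) :
    ((⟨1, a⟩ : ℤ√d) ^ n).re
      = ∑ k ∈ range (n + 1), n.choose k * a ^ k * ((sqrtd : ℤ√d) ^ k).re := by
  rw [show (⟨1, a⟩ : ℤ√d) = (a : ℤ√d) * sqrtd + 1 by ext <;> simp, add_pow, re_sum]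
  refine sum_congr rfl fun k _ => ?_
  rw [one_pow, mul_one, mul_pow, ← Int.cast_pow, ← Int.cast_natCast (R := ℤ√d), mul_comm,
    ← mul_assoc, ← Int.cast_mul, re_smul, mul_comm (n.choose k : ℤ)]

theorem re_sqrtd_pow_two_mul (j : ℕ) : ((sqrtd : ℤ√d) ^ (2 * j)).re = d ^ j := by
  rw [pow_mul, sq, dmuld, ← Int.cast_pow, re_intCast]

theorem re_sqrtd_pow_two_mul_add_one (j : ℕ) : ((sqrtd : ℤ√d) ^ (2 * j + 1)).re = 0 := by
  rw [pow_succ, pow_mul, sq, dmuld, ← Int.cast_pow, re_smul, re_sqrtd, mul_zero]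

theorem im_dvd_im_pow (z : ℤ√d) (n : ℕ) : z.im ∣ (z ^ n).im := by
  induction n with
  | zero => simp
  | succ n ih =>
    rw [pow_succ, im_mul]
    exact dvd_add (dvd_mul_left _ _) (ih.mul_right _)

end Zsqrtd

namespace GaussianInt

theorem two_pow_succ_dvd_choose_mul_pow_mul_re_sqrtd_pow {n c k : ℕ} {a : ℤ} (ha : Even a)
    (hc : 2 ^ c ∣ n.choose 2 * a.natAbs ^ 2) (hk : 3 ≤ k) :
    (2 : ℤ) ^ (c + 1) ∣ n.choose k * a ^ k * ((sqrtd : ℤ[i]) ^ k).re := by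
  obtain ⟨j, rfl | rfl⟩ := Nat.even_or_odd' k
  · have h := Int.natCast_dvd_natCast.mpr <| two_pow_succ_dvd_choose_mul_pow
      (Int.natAbs_dvd_natAbs.mpr ha.two_dvd) hc (j := j) (by omega)
    push_cast at h
    rw [(even_two_mul j).pow_abs] at h
    exact h.mul_right _
  · simp [re_sqrtd_pow_two_mul_add_one]

theorem two_pow_succ_dvd_re_mk_one_pow_sub {n c : ℕ} {a : ℤ} (ha : Even a) (hn : 2 ≤ n)
    (hc : 2 ^ c ∣ n.choose 2 * a.natAbs ^ 2) :
    (2 : ℤ) ^ (c + 1) ∣ ((⟨1, a⟩ : ℤ[i]) ^ n).re - (1 - n.choose 2 * a ^ 2) := by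
  rw [re_mk_one_pow, show n + 1 = n - 2 + 1 + 1 + 1 by omega, sum_range_succ', sum_range_succ',
    sum_range_succ']
  have h2 : ((sqrtd : ℤ[i]) ^ 2).re = -1 := by simpa using re_sqrtd_pow_two_mul (d := -1) 1
  simp only [h2, re_sqrtd, zero_add, Nat.reduceAdd, mul_neg, mul_one, Nat.choose_one_right,
    pow_one, mul_zero, add_zero, Nat.choose_zero_right, Nat.cast_one, pow_zero, re_one]
  rw [show ∀ s t : ℤ, s + -t + 1 - (1 - t) = s by intros; ring]
  exact dvd_sum fun k _ => two_pow_succ_dvd_choose_mul_pow_mul_re_sqrtd_pow ha hc (by omega)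

theorem abs_re_mk_one_pow_ne_one {a : ℤ} (ha : Even a) (ha0 : a ≠ 0) {n : ℕ} (hn : 2 ≤ n) :
    |((⟨1, a⟩ : ℤ[i]) ^ n).re| ≠ 1 := by
  set D := n.choose 2 * a.natAbs ^ 2 with hD
  have hD0 : D ≠ 0 :=
    mul_ne_zero (Nat.choose_pos hn).ne' (pow_ne_zero _ (Int.natAbs_ne_zero.mpr ha0))
  have hDz : (D : ℤ) = n.choose 2 * a ^ 2 := by rw [hD]; push_cast; rw [sq_abs]
  set c := padicValNat 2 D
  have hc2 : 2 ≤ c := by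
    refine (padicValNat_dvd_iff_le hD0).mp (Dvd.dvd.mul_left ?_ _)
    exact pow_dvd_pow_of_dvd (Int.natAbs_dvd_natAbs.mpr ha.two_dvd) 2
  have hR := two_pow_succ_dvd_re_mk_one_pow_sub ha hn (pow_padicValNat_dvd (n := D))
  rw [← hDz] at hR
  intro h1
  rcases (abs_eq zero_le_one).mp h1 with h | h <;> rw [h] at hR
  · refine pow_succ_padicValNat_not_dvd (p := 2) hD0 (Int.natCast_dvd_natCast.mp ?_)
    simpa using hR
  · have h4D : (4 : ℤ) ∣ D := by
      exact_mod_cast (pow_dvd_pow 2 hc2).trans (pow_padicValNat_dvd (n := D))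
    have h4R : (4 : ℤ) ∣ -1 - (1 - D) := (pow_dvd_pow 2 (by omega : 2 ≤ c + 1)).trans hR
    omega

theorem pow_four_eq_one_of_isUnit {z : ℤ[i]} (hz : IsUnit z) : z ^ 4 = 1 := by
  have hnorm : z.re * z.re + z.im * z.im = 1 := by
    simpa [norm_def] using (norm_eq_one_iff' (by norm_num) z).mpr hz
  have hreim : z.re * z.im = 0 := by
    have : 2 * (z.re * z.im) ≤ 1 ∧ -1 ≤ 2 * (z.re * z.im) := by
      constructor <;> nlinarith [sq_nonneg (z.re - z.im), sq_nonneg (z.re + z.im)]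
    omega
  rw [show 4 = 2 * 2 by rfl, pow_mul]
  ext <;> simp only [sq, re_mul, im_mul, re_one, im_one]
  · linear_combination (z.re * z.re + z.im * z.im + 1) * hnorm - 8 * (z.re * z.im) * hreim
  · linear_combination 4 * (z.re * z.re - z.im * z.im) * hreim

theorem isCoprime_mk_one_mk_neg_one {x : ℤ} (hx : Even x) :
    IsCoprime (⟨x, 1⟩ : ℤ[i]) ⟨x, -1⟩ := by
  obtain ⟨r, rfl⟩ := hx
  exact ⟨⟨r + r, -1 + 2 * r ^ 2⟩, ⟨0, -2 * r ^ 2⟩, by ext <;> simp [re_mul, im_mul] <;> ring⟩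

theorem exists_pow_eq_mk_one {x y : ℤ} {n : ℕ} (hx : Even x) (hn : Odd n)
    (h : x ^ 2 + 1 = y ^ n) : ∃ w : ℤ[i], w ^ n = ⟨x, 1⟩ := by
  have hprod : (⟨x, 1⟩ : ℤ[i]) * ⟨x, -1⟩ = (y : ℤ[i]) ^ n := by
    rw [← Int.cast_pow, ← h, intCast_val]
    ext <;> simp [re_mul, im_mul]
    ring
  obtain ⟨β, ν, hν⟩ := exists_associated_pow_of_mul_eq_pow' (isCoprime_mk_one_mk_neg_one hx) hprod
  refine ⟨ν ^ n * β, ?_⟩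
  have hν4 : ν ^ 4 = 1 := Units.ext (by simpa using pow_four_eq_one_of_isUnit ν.isUnit)
  rw [mul_pow, ← pow_mul, ← Units.val_pow_eq_pow_val, pow_mul_self_eq_of_pow_four_eq_one hν4 hn,
    mul_comm, hν]

theorem even_re_and_re_ne_zero_of_pow_eq {w : ℤ[i]} {n : ℕ} {x : ℤ} (hn : n ≠ 0) (hx : Even x)
    (hx0 : x ≠ 0) (him : w.im = 1 ∨ w.im = -1) (hw : w ^ n = ⟨x, 1⟩) :
    Even w.re ∧ w.re ≠ 0 := by
  have hnorm : (w.re ^ 2 + 1) ^ n = x ^ 2 + 1 := by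
    have := congrArg norm hw
    rw [show (w ^ n).norm = w.norm ^ n from map_pow normMonoidHom w n] at this
    rcases him with h | h <;> simpa [norm_def, h, sq] using this
  constructor
  · have : Odd ((w.re ^ 2 + 1) ^ n) := hnorm ▸ (hx.pow_of_ne_zero two_ne_zero).add_one
    simpa [Int.odd_pow, hn, parity_simps] using this
  · rintro h0
    exact hx0 (by simpa [h0] using hnorm)

theorem abs_re_sqrtd_pow_mul {n : ℕ} (hn : Odd n) (v : ℤ[i]) :
    |((sqrtd : ℤ[i]) ^ n * v).re| = |v.im| := by
  obtain ⟨m, rfl⟩ := hn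
  rw [pow_succ, pow_mul, sq, dmuld, ← Int.cast_pow, mul_assoc, re_smul, muld_val]
  simp [abs_mul]

theorem abs_re_mk_one_pow {w : ℤ[i]} (him : w.im = 1 ∨ w.im = -1) {n : ℕ} (hn : Odd n) :
    |((⟨1, w.re⟩ : ℤ[i]) ^ n).re| = |(w ^ n).im| := by
  rcases him with h | h
  · rw [show (⟨1, w.re⟩ : ℤ[i]) = sqrtd * star w by ext <;> simp [h], mul_pow, ← star_pow,
      abs_re_sqrtd_pow_mul hn, im_star, abs_neg]
  · rw [show (⟨1, w.re⟩ : ℤ[i]) = sqrtd * w by ext <;> simp [h], mul_pow,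
      abs_re_sqrtd_pow_mul hn]

end GaussianInt

/-- **Lebesgue's theorem (1850).** The equation `x² + 1 = yⁿ` has no solutions in
positive integers `x, y, n` with `min {x, y, n} > 1`. -/
theorem lebesgue_x_sq_add_one_ne_pow :
    ∀ x y n : ℕ, 1 < x → 1 < y → 1 < n → x ^ 2 + 1 ≠ y ^ n := by
  intro x y n hx _ hn heq
  rcases Nat.even_or_odd n with ⟨k, rfl⟩ | hodd
  · refine Nat.not_exists_sq' (Nat.lt_add_one _) (by nlinarith) ⟨y ^ k, ?_⟩
    rw [heq]; ring
  have hZ : (x : ℤ) ^ 2 + 1 = (y : ℤ) ^ n := by exact_mod_cast heq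
  have hxe : Even (x : ℤ) := Int.even_of_sq_add_one_eq_pow hn hZ
  obtain ⟨w, hw⟩ := GaussianInt.exists_pow_eq_mk_one hxe hodd hZ
  have him : w.im = 1 ∨ w.im = -1 :=
    Int.isUnit_iff.mp (isUnit_of_dvd_one (by simpa [hw] using w.im_dvd_im_pow n))
  obtain ⟨hre, hre0⟩ :=
    GaussianInt.even_re_and_re_ne_zero_of_pow_eq (by omega) hxe (by omega) him hw
  refine GaussianInt.abs_re_mk_one_pow_ne_one hre hre0 hn ?_
  rw [GaussianInt.abs_re_mk_one_pow him hodd, hw]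
  exact abs_one
end

section
/- The equation x² + 7 = 2^{n+2} in positive integers x, n has only the solutions (x, n) = (1, 1), (3, 2), (5, 3), (11, 5) and (181, 13). -/
/-!
Let `α = (1 + √-7) / 2`, an element of norm `2`, and write `α ^ n = (a n + b n √-7) / 2`.
A descent, which is unique factorization in `ℤ[α]` in elementary form, shows that the only odd
solutions of `A² + 7 B² = 2 ^ (n + 2)` are `(± a n, ± b n)`. So `x² + 7 = 2 ^ (n + 2)` forces
`b n = ± 1`. From `n = 3` on, `b n` is `7, 5, 7, 5, …` modulo `8`, so `b n = 1` only for
`n = 1, 2`. For `b n = -1` we use the expansion `(1 + √-7) ^ n = 2 ^ (n - 1) (a n + b n √-7)`.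
If `l ≡ l₀ (mod 3)` and `7 ^ a ∥ l - l₀`, then `(1 + √-7) ^ (l - l₀) ≡ 1 + (l - l₀) √-7` and
`2 ^ (l - l₀) ≡ 1` modulo `7 ^ (a + 1)`. If also `b l = b l₀`, comparing `√-7`-parts gives
`7 ^ (a + 1) ∣ (l - l₀) a l₀`, while `7 ∤ a l₀` because `a l₀ ² ≡ 2 ^ (l₀ + 2) (mod 7)`; so
`l = l₀`. Thus `b` is injective on each residue class modulo `3`, and since `b n = -1` at
`n = 3, 13, 5`, one in each class, there are no other solutions.
-/

-- `((1 + √-7) / 2) ^ n = (nagellA n + nagellB n * √-7) / 2`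
def nagellB : ℕ → ℤ
  | 0 => 0
  | 1 => 1
  | n + 2 => nagellB (n + 1) - 2 * nagellB n

def nagellA (n : ℕ) : ℤ := 2 * nagellB (n + 1) - nagellB n

lemma nagellB_add_two (n : ℕ) : nagellB (n + 2) = nagellB (n + 1) - 2 * nagellB n := rfl

lemma two_mul_nagellB_succ (n : ℕ) : 2 * nagellB (n + 1) = nagellA n + nagellB n := by
  rw [nagellA]; ring

lemma two_mul_nagellA_succ (n : ℕ) : 2 * nagellA (n + 1) = nagellA n - 7 * nagellB n := by
  rw [nagellA, nagellA, nagellB_add_two]; ring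

lemma nagellA_succ_add_seven_mul_nagellB_succ (n : ℕ) :
    nagellA (n + 1) + 7 * nagellB (n + 1) = 4 * nagellA n := by
  linarith [two_mul_nagellA_succ n, two_mul_nagellB_succ n]

lemma sq_nagellA_add_seven_mul_sq_nagellB (n : ℕ) :
    nagellA n ^ 2 + 7 * nagellB n ^ 2 = 2 ^ (n + 2) := by
  induction n with
  | zero => decide
  | succ n ih =>
    have hA := two_mul_nagellA_succ n
    have hB := two_mul_nagellB_succ n
    have : 4 * (nagellA (n + 1) ^ 2 + 7 * nagellB (n + 1) ^ 2) = 4 * 2 ^ (n + 1 + 2) := by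
      rw [pow_succ]
      linear_combination (2 * nagellA (n + 1) + nagellA n - 7 * nagellB n) * hA +
        7 * (2 * nagellB (n + 1) + nagellA n + nagellB n) * hB + 8 * ih
    exact mul_left_cancel₀ four_ne_zero this

lemma even_add_of_even_sq_add_seven_mul_sq {X Y : ℤ} (h : Even (X ^ 2 + 7 * Y ^ 2)) :
    Even (X + Y) := by
  have h7 : ¬Even (7 : ℤ) := by decide
  simpa [Int.even_add, Int.even_mul, Int.even_pow, h7] using h

-- The conclusion says `(A + B √-7) / 2 = α * (A' + B' √-7) / 2`.
lemma exists_descent_sq_add_seven_mul_sq {k : ℕ} (hk : 1 ≤ k) {A B : ℤ} (hA : Odd A)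
    (h : A ^ 2 + 7 * B ^ 2 = 2 ^ (k + 3)) (h4 : 4 ∣ B - A) :
    ∃ A' B', Odd A' ∧ Odd B' ∧ A' ^ 2 + 7 * B' ^ 2 = 2 ^ (k + 2) ∧
      2 * A = A' - 7 * B' ∧ 2 * B = A' + B' := by
  obtain ⟨c, hc⟩ := h4
  have hnorm : (2 * A + 7 * c) ^ 2 + 7 * c ^ 2 = 2 ^ (k + 2) := by
    have : 2 * ((2 * A + 7 * c) ^ 2 + 7 * c ^ 2) = 2 * 2 ^ (k + 2) := by
      rw [← pow_succ']
      linear_combination h - (7 * B + 7 * A + 28 * c) * hc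
    exact mul_left_cancel₀ two_ne_zero this
  have hc_odd : Odd c := by
    by_contra hc_even
    obtain ⟨e, rfl⟩ := Int.not_odd_iff_even.mp hc_even
    have hsmall : (A + 7 * e) ^ 2 + 7 * e ^ 2 = 2 ^ k := by
      have : 4 * ((A + 7 * e) ^ 2 + 7 * e ^ 2) = 4 * 2 ^ k := by
        rw [pow_add] at hnorm
        linear_combination hnorm
      exact mul_left_cancel₀ four_ne_zero this
    have : Even (A + 2 * (4 * e)) := by
      rw [show A + 2 * (4 * e) = A + 7 * e + e by ring]
      apply even_add_of_even_sq_add_seven_mul_sq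
      rw [hsmall]
      exact (Int.even_pow' (by omega)).mpr even_two
    exact Int.not_even_iff_odd.mpr hA ((Int.even_add.mp this).mpr (even_two_mul _))
  refine ⟨2 * A + 7 * c, c, ?_, hc_odd, hnorm, by ring, by linarith⟩
  exact (even_two_mul A).add_odd ((by decide : Odd (7 : ℤ)).mul hc_odd)

lemma sq_eq_sq_nagell_of_sq_add_seven_mul_sq {k : ℕ} (hk : 1 ≤ k) {A B : ℤ} (hA : Odd A)
    (hB : Odd B) (h : A ^ 2 + 7 * B ^ 2 = 2 ^ (k + 2)) :
    A ^ 2 = nagellA k ^ 2 ∧ B ^ 2 = nagellB k ^ 2 := by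
  induction k, hk using Nat.le_induction generalizing A B with
  | base =>
    have hA0 : 0 < A ^ 2 := sq_pos_of_ne_zero (by rintro rfl; simp at hA)
    have hB0 : 0 < B ^ 2 := sq_pos_of_ne_zero (by rintro rfl; simp at hB)
    have hA1 : nagellA 1 ^ 2 = 1 := by decide
    have hB1 : nagellB 1 ^ 2 = 1 := by decide
    norm_num at h
    constructor <;> linarith
  | succ k hk ih =>
    wlog h4 : 4 ∣ B - A generalizing B
    · have h4' : 4 ∣ -B - A := by
        obtain ⟨m, rfl⟩ := hA
        obtain ⟨q, rfl⟩ := hB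
        omega
      simpa using this hB.neg (by simpa using h) h4'
    obtain ⟨A', B', hA', hB', h', hAA', hBB'⟩ := exists_descent_sq_add_seven_mul_sq hk hA h h4
    obtain ⟨j, rfl⟩ : ∃ j, k = j + 1 := ⟨k - 1, by omega⟩
    have ha := two_mul_nagellA_succ (j + 1)
    have hb := two_mul_nagellB_succ (j + 1)
    have hab := nagellA_succ_add_seven_mul_nagellB_succ j
    have hA_not_even : ¬Even A := Int.not_even_iff_odd.mpr hA
    obtain ⟨hsqA, hsqB⟩ := ih hA' hB' h'
    rcases sq_eq_sq_iff_eq_or_eq_neg.mp hsqA with rfl | rfl <;>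
      rcases sq_eq_sq_iff_eq_or_eq_neg.mp hsqB with rfl | rfl
    · constructor
      · rw [show A = nagellA (j + 2) by linarith]
      · rw [show B = nagellB (j + 2) by linarith]
    -- with mismatched signs `2 * A = ± 4 * nagellA j`
    · exact absurd ⟨nagellA j, by linarith⟩ hA_not_even
    · exact absurd ⟨-nagellA j, by linarith⟩ hA_not_even
    · constructor
      · rw [show A = -nagellA (j + 2) by linarith, neg_sq]
      · rw [show B = -nagellB (j + 2) by linarith, neg_sq]

lemma nagellB_mod_eight (m : ℕ) :
    ((nagellB (m + 3) : ZMod 8), (nagellB (m + 4) : ZMod 8)) ∈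
      ({(7, 5), (5, 7)} : Finset (ZMod 8 × ZMod 8)) := by
  induction m with
  | zero => decide
  | succ m ih =>
    have hstep : ∀ p ∈ ({(7, 5), (5, 7)} : Finset (ZMod 8 × ZMod 8)),
        (p.2, p.2 - 2 * p.1) ∈ ({(7, 5), (5, 7)} : Finset (ZMod 8 × ZMod 8)) := by decide
    show ((nagellB (m + 4) : ZMod 8), (nagellB (m + 3 + 2) : ZMod 8)) ∈ _
    rw [nagellB_add_two (m + 3), Int.cast_sub, Int.cast_mul, Int.cast_two]
    exact hstep _ ih

lemma nagellB_ne_one {n : ℕ} (hn : 3 ≤ n) : nagellB n ≠ 1 := by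
  obtain ⟨m, rfl⟩ := Nat.exists_eq_add_of_le' hn
  intro h
  have := nagellB_mod_eight m
  rw [h] at this
  revert this
  generalize (nagellB (m + 4) : ZMod 8) = y
  decide +revert

lemma pow_succ_dvd_choose_mul_pow_div_two {p a n k : ℕ} (hp : p.Prime) (hp5 : 5 ≤ p)
    (hn : p ^ a ∣ n) (hk : 2 ≤ k) : p ^ (a + 1) ∣ n.choose k * p ^ (k / 2) := by
  have hkn : p ^ a ∣ k * n.choose k := by
    obtain ⟨j, rfl⟩ := Nat.exists_eq_add_of_le' (by omega : 1 ≤ k)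
    rcases n with _ | n
    · simp
    · rw [mul_comm, ← Nat.add_one_mul_choose_eq]
      exact hn.mul_right _
  obtain ⟨v, m, hm, hkvm⟩ := Nat.exists_eq_pow_mul_and_not_dvd (by omega : k ≠ 0) p hp.ne_one
  have hv : p ^ a ∣ p ^ v * n.choose k := by
    have hcop : Nat.Coprime (p ^ a) m := Nat.Coprime.pow_left a ((hp.coprime_iff_not_dvd).mpr hm)
    exact hcop.dvd_of_dvd_mul_left (by rwa [← mul_assoc, mul_comm m, ← hkvm])
  have hvk : v + 1 ≤ k / 2 := by
    have hbern : 1 + v * 4 ≤ p ^ v := by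
      have := one_add_mul_le_pow (show (-2 : ℤ) ≤ 4 by norm_num) v
      exact (by exact_mod_cast this : 1 + v * 4 ≤ 5 ^ v).trans (Nat.pow_le_pow_left hp5 v)
    have : p ^ v ≤ k :=
      hkvm ▸ Nat.le_mul_of_pos_right _ (Nat.pos_of_ne_zero (by rintro rfl; simp at hm))
    omega
  calc p ^ (a + 1) ∣ p ^ v * n.choose k * p := by rw [pow_succ]; exact mul_dvd_mul_right hv p
    _ = n.choose k * p ^ (v + 1) := by ring
    _ ∣ _ := mul_dvd_mul_left _ (pow_dvd_pow p hvk)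

open Zsqrtd

lemma one_add_sqrtd_pow_sub_dvd {d : ℤ} {p a n : ℕ} (hp : p.Prime) (hp5 : 5 ≤ p)
    (hd : (p : ℤ) ∣ d) (hn : p ^ a ∣ n) :
    ((p ^ (a + 1) : ℤ) : ℤ√d) ∣ (1 + sqrtd) ^ n - (1 + (n : ℤ√d) * sqrtd) := by
  have hterm : ∀ k, 2 ≤ k → ((p ^ (a + 1) : ℤ) : ℤ√d) ∣ sqrtd ^ k * (n.choose k : ℤ√d) := by
    intro k hk
    have hdvd : (p ^ (a + 1) : ℤ) ∣ n.choose k * d ^ (k / 2) := by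
      obtain ⟨u, rfl⟩ := hd
      rw [mul_pow, ← mul_assoc]
      exact Dvd.dvd.mul_right
        (by exact_mod_cast pow_succ_dvd_choose_mul_pow_div_two hp hp5 hn hk) _
    have hsq : sqrtd ^ k = (d : ℤ√d) ^ (k / 2) * sqrtd ^ (k % 2) := by
      rw [← dmuld, ← sq, ← pow_mul, ← pow_add, Nat.div_add_mod]
    rw [hsq, mul_right_comm]
    refine Dvd.dvd.mul_right ?_ _
    rw [mul_comm]
    simpa using map_dvd (Int.castRingHom (ℤ√d)) hdvd
  rcases n with _ | n
  · simp
  rw [add_comm 1 sqrtd, add_pow, Finset.sum_range_succ', Finset.sum_range_succ']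
  simp only [pow_zero, one_pow, mul_one, zero_add, pow_one, Nat.add_sub_cancel,
    Nat.choose_zero_right, Nat.choose_one_right, Nat.cast_one]
  rw [show ∀ x y : ℤ√d, x + sqrtd * y + 1 - (1 + y * sqrtd) = x by intros; ring]
  exact Finset.dvd_sum fun k _ => hterm (k + 2) (by omega)

lemma two_mul_one_add_sqrtd_pow (n : ℕ) :
    2 * ((1 + sqrtd : ℤ√(-7)) ^ n).re = 2 ^ n * nagellA n ∧
      2 * ((1 + sqrtd : ℤ√(-7)) ^ n).im = 2 ^ n * nagellB n := by
  induction n with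
  | zero => decide
  | succ n ih =>
    simp only [pow_succ, re_mul, im_mul, re_add, im_add, re_one, im_one, re_sqrtd, im_sqrtd]
    constructor
    · linear_combination ih.1 - 7 * ih.2 - 2 ^ n * two_mul_nagellA_succ n
    · linear_combination ih.1 + ih.2 - 2 ^ n * two_mul_nagellB_succ n

lemma seven_pow_succ_dvd_two_pow_sub_one {a d : ℕ} (h3 : 3 ∣ d) (h7 : 7 ^ a ∣ d) :
    (7 : ℤ) ^ (a + 1) ∣ 2 ^ d - 1 := by
  obtain ⟨t, rfl⟩ : 3 * 7 ^ a ∣ d :=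
    Nat.Coprime.mul_dvd_of_dvd_of_dvd (Nat.Coprime.pow_right a (by norm_num)) h3 h7
  rw [pow_mul, pow_mul, show (2 : ℤ) ^ 3 = 8 by norm_num]
  have h8 : (7 : ℤ) ^ (a + 1) ∣ 8 ^ 7 ^ a - 1 := by
    simpa using dvd_sub_pow_of_dvd_sub (p := 7) (show ((7 : ℕ) : ℤ) ∣ 8 - 1 by norm_num) a
  exact h8.trans (by simpa using sub_dvd_pow_sub_pow (8 ^ 7 ^ a : ℤ) 1 t)

lemma not_seven_dvd_two_pow_mul_nagellA (n : ℕ) : ¬(7 : ℤ) ∣ 2 ^ n * nagellA n := by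
  have hp : Prime (7 : ℤ) := Nat.prime_iff_prime_int.mp Nat.prime_seven
  have h2 : ¬(7 : ℤ) ∣ 2 := by norm_num
  intro h
  rcases hp.dvd_or_dvd h with h | h
  · exact h2 (hp.dvd_of_dvd_pow h)
  · refine h2 (hp.dvd_of_dvd_pow (n := n + 2) ?_)
    rw [← sq_nagellA_add_seven_mul_sq_nagellB]
    exact dvd_add (dvd_pow h two_ne_zero) (dvd_mul_right _ _)

lemma eq_of_nagellB_eq_of_modEq_three {l₀ l : ℕ} (h3 : l₀ ≡ l [MOD 3])
    (hb : nagellB l₀ = nagellB l) : l₀ = l := by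
  wlog hle : l₀ ≤ l generalizing l₀ l
  · exact (this h3.symm hb.symm (by omega)).symm
  obtain ⟨d, rfl⟩ := Nat.exists_eq_add_of_le hle
  by_contra hne
  obtain ⟨a, m, hm, hd⟩ := Nat.exists_eq_pow_mul_and_not_dvd (by omega : d ≠ 0) 7 (by norm_num)
  have h7 : 7 ^ a ∣ d := hd ▸ dvd_mul_right _ _
  obtain ⟨E, hE⟩ := one_add_sqrtd_pow_sub_dvd (d := -7) Nat.prime_seven (by norm_num) (by norm_num) h7
  set U : ℤ√(-7) := 1 + sqrtd
  have him : (U ^ (l₀ + d)).im =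
      (U ^ l₀).im + d * (U ^ l₀).re + 7 ^ (a + 1) * (U ^ l₀ * E).im := by
    rw [pow_add, eq_add_of_sub_eq' hE]
    simp only [mul_add, mul_one, im_add, re_mul, im_mul, re_intCast, im_intCast, re_natCast,
      im_natCast, re_sqrtd, im_sqrtd]
    ring
  have hdvd : (7 : ℤ) ^ (a + 1) ∣ d * (2 ^ l₀ * nagellA l₀) := by
    have h2 := seven_pow_succ_dvd_two_pow_sub_one
      (by simpa using (Nat.modEq_iff_dvd' hle).mp h3) h7
    obtain ⟨hre₀, him₀⟩ := two_mul_one_add_sqrtd_pow l₀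
    have him₁ := (two_mul_one_add_sqrtd_pow (l₀ + d)).2
    rw [← hb] at him₁
    have : d * (2 ^ l₀ * nagellA l₀) =
        2 ^ l₀ * nagellB l₀ * (2 ^ d - 1) - 7 ^ (a + 1) * (2 * (U ^ l₀ * E).im) := by
      linear_combination him₁ - 2 * him - him₀ - d * hre₀
    rw [this]
    exact dvd_sub (h2.mul_left _) (dvd_mul_right _ _)
  have hp : Prime (7 : ℤ) := Nat.prime_iff_prime_int.mp Nat.prime_seven
  rw [hd, Nat.cast_mul, Nat.cast_pow, mul_assoc, pow_succ] at hdvd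
  rcases hp.dvd_or_dvd ((mul_dvd_mul_iff_left (by positivity)).mp hdvd) with h | h
  · exact hm (by exact_mod_cast h)
  · exact not_seven_dvd_two_pow_mul_nagellA l₀ h

lemma nagellB_sq_eq_one {n : ℕ} (hb : nagellB n ^ 2 = 1) :
    n = 1 ∨ n = 2 ∨ n = 3 ∨ n = 5 ∨ n = 13 := by
  rcases sq_eq_sq_iff_eq_or_eq_neg.mp (hb.trans (one_pow 2).symm) with h | h
  · have : n < 3 := not_le.mp fun hn => nagellB_ne_one hn h
    interval_cases n
    · exact absurd h (by decide)
    · exact Or.inl rfl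
    · exact Or.inr (Or.inl rfl)
  · have hclass : ∀ l₀, nagellB l₀ = -1 → l₀ % 3 = n % 3 → n = l₀ := fun l₀ h₀ h3 =>
      (eq_of_nagellB_eq_of_modEq_three h3 (h₀.trans h.symm)).symm
    have : n % 3 = 0 ∨ n % 3 = 1 ∨ n % 3 = 2 := by omega
    rcases this with h3 | h3 | h3
    · exact Or.inr (Or.inr (Or.inl (hclass 3 (by decide) (by omega))))
    · exact Or.inr (Or.inr (Or.inr (Or.inr (hclass 13 (by decide) (by omega)))))
    · exact Or.inr (Or.inr (Or.inr (Or.inl (hclass 5 (by decide) (by omega)))))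

/-- **Ramanujan–Nagell theorem.** The equation `x² + 7 = 2^(n+2)` in positive integers
`x, n` has only the solutions `(x, n) = (1, 1), (3, 2), (5, 3), (11, 5), (181, 13)`. -/
theorem ramanujan_nagell :
    ∀ x n : ℕ, 0 < x → 0 < n →
      (x ^ 2 + 7 = 2 ^ (n + 2) ↔
        (x, n) = (1, 1) ∨ (x, n) = (3, 2) ∨ (x, n) = (5, 3) ∨
        (x, n) = (11, 5) ∨ (x, n) = (181, 13)) := by
  intro x n _ hn
  constructor
  · intro h
    have hZ : (x : ℤ) ^ 2 + 7 * 1 ^ 2 = 2 ^ (n + 2) := by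
      rw [one_pow, mul_one]
      exact_mod_cast h
    have hx : Odd (x : ℤ) := by
      have := even_add_of_even_sq_add_seven_mul_sq (hZ ▸ (Int.even_pow.mpr ⟨even_two, by omega⟩))
      exact Int.not_even_iff_odd.mp (Int.even_add_one.mp this)
    obtain ⟨hxA, hB⟩ := sq_eq_sq_nagell_of_sq_add_seven_mul_sq hn hx odd_one hZ
    have hxA' : x = (nagellA n).natAbs := Int.natAbs_eq_iff_sq_eq.mpr hxA
    rcases nagellB_sq_eq_one (hB.symm.trans (one_pow 2)) with rfl | rfl | rfl | rfl | rfl <;>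
      subst hxA' <;> decide
  · rintro (h | h | h | h | h) <;> obtain ⟨rfl, rfl⟩ := Prod.mk.inj h <;> norm_num
end
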